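/- arXiv:2406.17358 — 4 statements merged into one kernel-verified Lean document; each statement's English description precedes it below -/
import Mathlib

section
/- Let b ∈ L^∞(ℝ^d) be non-negative and let κ_r = r^{-d} |B_1(0)|^{-1} 𝟙_{B_r(0)} be the normalized indicator of the ball of radius r. If there exist T > 0 and c > 0 such that for every (x_0, ν_0) ∈ ℝ^d × S^{d-1} the lower limit as r → 0 of the average (1/(2T)) ∫_{-T}^{T} (b ∗ κ_r)(x_0 + t ν_0) dt is at least c, then for the same T and c one has (1/(2T)) ∫_{-T}^{T} (b ∗ κ_r)(x_0 + t ν_0) dt ≥ c for every (x_0, ν_0) ∈ ℝ^d × S^{d-1} and every r > 0. -/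
/-!
Work with `ℝ≥0∞`-valued convolutions, for which Tonelli and Fatou apply without integrability
side conditions. Write `G_ρ(x) = ∫_{-T}^{T} (b ∗ κ_ρ)(x + tν) dt`. Associativity and
commutativity of convolution give `κ_r ∗ G_ρ = ∫_{-T}^{T} (κ_ρ ∗ (b ∗ κ_r))(· + tν) dt`.
As `ρ → 0`, Fatou's lemma bounds the left side at `x₀` from below by `2Tc`, because `G_ρ ≥ 2Tc`
eventually at every point and `∫ κ_r = 1`. On the right, `b ∗ κ_r` is uniformly continuous:
`b` is bounded, and moving the ball `B_r(x)` by `z` adds at most a shell of volume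
`|B_{r+|z|}| - |B_r|`. Hence `κ_ρ ∗ (b ∗ κ_r) → b ∗ κ_r` uniformly and the right side tends
to `G_r(x₀)`.
-/

open MeasureTheory Metric Filter Set

/-- The normalized indicator of the ball of radius `r`:
`κ_r = r^{-d} |B_1(0)|⁻¹ 𝟙_{B_r(0)}`. -/
noncomputable def kappa (d : ℕ) (r : ℝ) (x : EuclideanSpace ℝ (Fin d)) : ℝ :=
  if ‖x‖ < r then ((volume (ball (0 : EuclideanSpace ℝ (Fin d)) 1)).toReal * r ^ d)⁻¹ else 0

/-- Convolution `b ∗ κ_r`. -/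
noncomputable def convK {d : ℕ} (b : EuclideanSpace ℝ (Fin d) → ℝ) (r : ℝ)
    (x : EuclideanSpace ℝ (Fin d)) : ℝ :=
  ∫ y, b y * kappa d r (x - y)

/-- The time average `(1/(2T)) ∫_{-T}^{T} (b ∗ κ_r)(x_0 + t ν_0) dt`. -/
noncomputable def avgSeg {d : ℕ} (b : EuclideanSpace ℝ (Fin d) → ℝ) (r T : ℝ)
    (x0 ν0 : EuclideanSpace ℝ (Fin d)) : ℝ :=
  (2 * T)⁻¹ * ∫ t in (-T)..T, convK b r (x0 + t • ν0)

open scoped ENNReal Topology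

namespace MeasureTheory

section LConvolution

variable {G : Type*} [MeasurableSpace G] [AddCommGroup G] {μ : Measure G}

theorem lconvolution_left_comm [MeasurableAdd₂ G] [MeasurableNeg G] [SFinite μ]
    [μ.IsAddLeftInvariant] [μ.IsNegInvariant] {f g k : G → ℝ≥0∞}
    (hf : Measurable f) (hg : Measurable g) (hk : Measurable k) :
    f ⋆ₗ[μ] g ⋆ₗ[μ] k = g ⋆ₗ[μ] f ⋆ₗ[μ] k := by
  rw [lconvolution_assoc hf hg hk, lconvolution_comm (f := f), lconvolution_assoc hg hf hk]

theorem lconvolution_lintegral_comp_add [MeasurableAdd₂ G] [MeasurableNeg G] [SFinite μ]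
    {α : Type*} [MeasurableSpace α] {τ : Measure α} [SFinite τ] {f g : G → ℝ≥0∞} {a : α → G}
    (hf : Measurable f) (hg : Measurable g) (ha : Measurable a) :
    (f ⋆ₗ[μ] fun x => ∫⁻ t, g (x + a t) ∂τ) = fun x => ∫⁻ t, (f ⋆ₗ[μ] g) (x + a t) ∂τ := by
  ext x
  simp only [lconvolution_def]
  calc ∫⁻ y, f y * ∫⁻ t, g (-y + x + a t) ∂τ ∂μ
      = ∫⁻ y, ∫⁻ t, f y * g (-y + (x + a t)) ∂τ ∂μ := lintegral_congr fun y => by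
        rw [← lintegral_const_mul _ (by fun_prop)]
        simp only [add_assoc]
    _ = ∫⁻ t, ∫⁻ y, f y * g (-y + (x + a t)) ∂μ ∂τ := lintegral_lintegral_swap (by fun_prop)

theorem lconvolution_apply_le {k F : G → ℝ≥0∞} {x : G} {C : ℝ≥0∞} (hk : Measurable k)
    (hk_one : ∫⁻ y, k y ∂μ = 1) (hF : ∀ y, k y ≠ 0 → F (x - y) ≤ C) :
    (k ⋆ₗ[μ] F) x ≤ C :=
  calc (k ⋆ₗ[μ] F) x ≤ ∫⁻ y, k y * C ∂μ := lintegral_mono fun y => by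
        rcases eq_or_ne (k y) 0 with hy | hy
        · simp [hy]
        · rw [neg_add_eq_sub]
          exact mul_le_mul_right (hF y hy) _
    _ = C := by rw [lintegral_mul_const _ hk, hk_one, one_mul]

end LConvolution

end MeasureTheory

section BallKernel

variable {E : Type*} [NormedAddCommGroup E] [MeasurableSpace E]

noncomputable def ballKernel (μ : Measure E) (r : ℝ) : E → ℝ≥0∞ :=
  (ball 0 r).indicator fun _ => (μ (ball 0 r))⁻¹

variable [BorelSpace E] {μ : Measure E}

@[fun_prop]
theorem measurable_ballKernel (r : ℝ) : Measurable (ballKernel μ r) :=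
  measurable_const.indicator measurableSet_ball

variable [μ.IsAddHaarMeasure] {f : E → ℝ≥0∞} {M : ℝ≥0∞} {r : ℝ}

theorem lconvolution_ballKernel_apply (hr : 0 < r) (f : E → ℝ≥0∞) (x : E) :
    (f ⋆ₗ[μ] ballKernel μ r) x = (∫⁻ y in ball x r, f y ∂μ) / μ (ball 0 r) := by
  have hind : ∀ y, f y * ballKernel μ r (-y + x)
      = (ball x r).indicator (fun y => f y * (μ (ball 0 r))⁻¹) y := by
    intro y
    simp only [ballKernel, indicator, mem_ball, dist_eq_norm, neg_add_eq_sub, sub_zero,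
      norm_sub_rev x y]
    split_ifs <;> simp
  rw [lconvolution_def, lintegral_congr hind, lintegral_indicator measurableSet_ball,
    lintegral_mul_const' _ _ (ENNReal.inv_ne_top.2 (measure_ball_pos μ 0 hr).ne'),
    div_eq_mul_inv]

variable [NormedSpace ℝ E] [FiniteDimensional ℝ E]

theorem lintegral_ballKernel (hr : 0 < r) : ∫⁻ x, ballKernel μ r x ∂μ = 1 := by
  rw [ballKernel, lintegral_indicator measurableSet_ball, setLIntegral_const,
    ENNReal.inv_mul_cancel (measure_ball_pos μ 0 hr).ne' measure_ball_lt_top.ne]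

theorem lconvolution_ballKernel_le (hf : ∀ᵐ y ∂μ, f y ≤ M) (hr : 0 < r) (x : E) :
    (f ⋆ₗ[μ] ballKernel μ r) x ≤ M := by
  rw [lconvolution_ballKernel_apply hr,
    ENNReal.div_le_iff (measure_ball_pos μ 0 hr).ne' measure_ball_lt_top.ne]
  calc ∫⁻ y in ball x r, f y ∂μ ≤ ∫⁻ _ in ball x r, M ∂μ :=
        lintegral_mono_ae (ae_restrict_of_ae hf)
    _ = M * μ (ball 0 r) := by rw [setLIntegral_const, Measure.addHaar_ball_center]

theorem setLIntegral_ball_sub_le (hf : ∀ᵐ y ∂μ, f y ≤ M) {s : ℝ} (x z : E) (hz : ‖z‖ ≤ s) :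
    ∫⁻ y in ball (x - z) r, f y ∂μ
      ≤ ∫⁻ y in ball x r, f y ∂μ + M * (μ (ball 0 (r + s)) - μ (ball 0 r)) := by
  have hrs : ball x r ⊆ ball x (r + s) := ball_subset_ball (by linarith [norm_nonneg z])
  have hsub : ball (x - z) r ⊆ ball x r ∪ (ball x (r + s) \ ball x r) := by
    rw [union_sdiff_self]
    refine subset_union_of_subset_right (ball_subset_ball' ?_) _
    rw [dist_self_sub_left]
    linarith
  calc ∫⁻ y in ball (x - z) r, f y ∂μ
      ≤ ∫⁻ y in ball x r, f y ∂μ + ∫⁻ y in ball x (r + s) \ ball x r, f y ∂μ :=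
        (lintegral_mono_set hsub).trans (lintegral_union_le _ _ _)
    _ ≤ ∫⁻ y in ball x r, f y ∂μ + ∫⁻ _ in ball x (r + s) \ ball x r, M ∂μ :=
        add_le_add le_rfl (lintegral_mono_ae (ae_restrict_of_ae hf))
    _ = ∫⁻ y in ball x r, f y ∂μ + M * (μ (ball 0 (r + s)) - μ (ball 0 r)) := by
        rw [setLIntegral_const, measure_sdiff hrs measurableSet_ball.nullMeasurableSet
          measure_ball_lt_top.ne, Measure.addHaar_ball_center μ x (r + s),
          Measure.addHaar_ball_center μ x r]

theorem lconvolution_ballKernel_sub_le (hf : ∀ᵐ y ∂μ, f y ≤ M) (hr : 0 < r) {s : ℝ}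
    (x z : E) (hz : ‖z‖ ≤ s) :
    (f ⋆ₗ[μ] ballKernel μ r) (x - z)
      ≤ (f ⋆ₗ[μ] ballKernel μ r) x + M * (μ (ball 0 (r + s)) - μ (ball 0 r)) / μ (ball 0 r) := by
  rw [lconvolution_ballKernel_apply hr, lconvolution_ballKernel_apply hr,
    ENNReal.div_add_div_same]
  exact ENNReal.div_le_div_right (setLIntegral_ball_sub_le hf x z hz) _

theorem ballKernel_lconvolution_le (hf : ∀ᵐ y ∂μ, f y ≤ M) (hr : 0 < r) {ρ : ℝ} (hρ : 0 < ρ)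
    (x : E) :
    (ballKernel μ ρ ⋆ₗ[μ] f ⋆ₗ[μ] ballKernel μ r) x
      ≤ (f ⋆ₗ[μ] ballKernel μ r) x + M * (μ (ball 0 (r + ρ)) - μ (ball 0 r)) / μ (ball 0 r) :=
  lconvolution_apply_le (measurable_ballKernel ρ) (lintegral_ballKernel hρ) fun z hz =>
    lconvolution_ballKernel_sub_le hf hr x z
      (mem_ball_zero_iff.1 (mem_of_indicator_ne_zero hz)).le

theorem tendsto_addHaar_ball_add_sub (hr : 0 < r) :
    Tendsto (fun s => μ (ball (0 : E) (r + s)) - μ (ball 0 r)) (𝓝 0) (𝓝 0) := by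
  have hball : Tendsto (fun s => μ (ball (0 : E) s)) (𝓝 r) (𝓝 (μ (ball 0 r))) := by
    have heq : (fun s => ENNReal.ofReal (s ^ Module.finrank ℝ E) * μ (ball 0 1))
        =ᶠ[𝓝 r] fun s => μ (ball (0 : E) s) :=
      (eventually_gt_nhds hr).mono fun s hs => (Measure.addHaar_ball_of_pos μ 0 hs).symm
    rw [Measure.addHaar_ball_of_pos μ 0 hr]
    exact (ENNReal.Tendsto.mul_const (ENNReal.tendsto_ofReal ((continuous_pow _).tendsto r))
      (Or.inr measure_ball_lt_top.ne)).congr' heq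
  have hshift : Tendsto (fun s : ℝ => r + s) (𝓝 0) (𝓝 r) := by
    simpa using (tendsto_id (x := 𝓝 (0 : ℝ))).const_add r
  simpa using ENNReal.Tendsto.sub (hball.comp hshift)
    (tendsto_const_nhds (x := μ (ball (0 : E) r)))
    (Or.inl measure_ball_lt_top.ne)

end BallKernel

section Segment

variable {E : Type*} [NormedAddCommGroup E] [NormedSpace ℝ E]

noncomputable def segmentLIntegral (T : ℝ) (ν : E) (F : E → ℝ≥0∞) (x : E) : ℝ≥0∞ :=
  ∫⁻ t in Ioc (-T) T, F (x + t • ν)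

variable {T : ℝ} {ν : E} {F : E → ℝ≥0∞}

theorem segmentLIntegral_lt_top {M : ℝ≥0∞} (hF : ∀ x, F x ≤ M) (hM : M ≠ ∞) (x : E) :
    segmentLIntegral T ν F x < ∞ :=
  calc segmentLIntegral T ν F x ≤ ∫⁻ _ in Ioc (-T) T, M := lintegral_mono fun t => hF _
    _ < ∞ := by
      rw [setLIntegral_const]
      exact ENNReal.mul_lt_top hM.lt_top measure_Ioc_lt_top

theorem segmentLIntegral_le_add {F' : E → ℝ≥0∞} {C : ℝ≥0∞} (hF : ∀ y, F y ≤ F' y + C) (x : E) :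
    segmentLIntegral T ν F x ≤ segmentLIntegral T ν F' x + C * volume (Ioc (-T) T) :=
  calc segmentLIntegral T ν F x ≤ ∫⁻ t in Ioc (-T) T, (F' (x + t • ν) + C) :=
        lintegral_mono fun t => hF _
    _ = _ := by rw [lintegral_add_right _ measurable_const, setLIntegral_const]; rfl

variable [MeasurableSpace E] [BorelSpace E] [SecondCountableTopology E]

@[fun_prop]
theorem measurable_segmentLIntegral (hF : Measurable F) :
    Measurable (segmentLIntegral T ν F) :=
  Measurable.lintegral_prod_right' (f := fun p : E × ℝ => F (p.1 + p.2 • ν)) (by fun_prop)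

theorem lconvolution_segmentLIntegral {μ : Measure E} [SFinite μ]
    {f : E → ℝ≥0∞} (hf : Measurable f) (hF : Measurable F) :
    f ⋆ₗ[μ] segmentLIntegral T ν F = segmentLIntegral T ν (f ⋆ₗ[μ] F) :=
  lconvolution_lintegral_comp_add hf hF (by fun_prop)

end Segment

section ApproximateIdentity

variable {E : Type*} [NormedAddCommGroup E] [NormedSpace ℝ E] [FiniteDimensional ℝ E]
  [MeasurableSpace E] [BorelSpace E] {μ : Measure E} [μ.IsAddHaarMeasure]
  {f : E → ℝ≥0∞} {M : ℝ≥0∞} {T r : ℝ} {ν : E}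

theorem lconvolution_segmentLIntegral_comm {g k : E → ℝ≥0∞} (hf : Measurable f)
    (hg : Measurable g) (hk : Measurable k) :
    k ⋆ₗ[μ] segmentLIntegral T ν (f ⋆ₗ[μ] g) = segmentLIntegral T ν (g ⋆ₗ[μ] f ⋆ₗ[μ] k) := by
  rw [lconvolution_segmentLIntegral hk (measurable_lconvolution μ hf hg),
    lconvolution_left_comm hk hf hg, lconvolution_comm (f := k), lconvolution_left_comm hf hg hk]

theorem limsup_segmentLIntegral_ballKernel_lconvolution_le (hfM : ∀ᵐ y ∂μ, f y ≤ M)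
    (hM : M ≠ ∞) (hr : 0 < r) (x : E) :
    limsup (fun ρ => segmentLIntegral T ν (ballKernel μ ρ ⋆ₗ[μ] f ⋆ₗ[μ] ballKernel μ r) x)
      (𝓝[>] 0) ≤ segmentLIntegral T ν (f ⋆ₗ[μ] ballKernel μ r) x := by
  set ε := fun ρ => M * (μ (ball 0 (r + ρ)) - μ (ball 0 r)) / μ (ball 0 r) * volume (Ioc (-T) T)
  have hε : Tendsto ε (𝓝[>] 0) (𝓝 0) := by
    have h0 : Tendsto ε (𝓝 0) (𝓝 (M * 0 / μ (ball 0 r) * volume (Ioc (-T) T))) :=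
      ENNReal.Tendsto.mul_const (ENNReal.Tendsto.div_const
        (ENNReal.Tendsto.const_mul (tendsto_addHaar_ball_add_sub hr) (Or.inr hM))
        (Or.inr (measure_ball_pos μ 0 hr).ne')) (Or.inr measure_Ioc_lt_top.ne)
    rw [mul_zero, ENNReal.zero_div, zero_mul] at h0
    exact h0.mono_left nhdsWithin_le_nhds
  calc limsup (fun ρ => segmentLIntegral T ν (ballKernel μ ρ ⋆ₗ[μ] f ⋆ₗ[μ] ballKernel μ r) x)
        (𝓝[>] 0)
      ≤ limsup (fun ρ => segmentLIntegral T ν (f ⋆ₗ[μ] ballKernel μ r) x + ε ρ) (𝓝[>] 0) :=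
        limsup_le_limsup (eventually_nhdsWithin_of_forall fun ρ hρ =>
          segmentLIntegral_le_add (ballKernel_lconvolution_le hfM hr hρ) x)
    _ = segmentLIntegral T ν (f ⋆ₗ[μ] ballKernel μ r) x := by
        simpa using (tendsto_const_nhds.add hε).limsup_eq

theorem le_segmentLIntegral_of_eventually_le {a : ℝ≥0∞} (hf : Measurable f)
    (hfM : ∀ᵐ y ∂μ, f y ≤ M) (hM : M ≠ ∞)
    (h : ∀ x, ∀ᶠ ρ in 𝓝[>] 0, a ≤ segmentLIntegral T ν (f ⋆ₗ[μ] ballKernel μ ρ) x)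
    (hr : 0 < r) (x : E) :
    a ≤ segmentLIntegral T ν (f ⋆ₗ[μ] ballKernel μ r) x := by
  set G := fun ρ => segmentLIntegral T ν (f ⋆ₗ[μ] ballKernel μ ρ)
  calc a = ∫⁻ z, ballKernel μ r z * a ∂μ := by
        rw [lintegral_mul_const _ (measurable_ballKernel r), lintegral_ballKernel hr, one_mul]
    _ ≤ ∫⁻ z, liminf (fun ρ => ballKernel μ r z * G ρ (-z + x)) (𝓝[>] 0) ∂μ :=
        lintegral_mono fun z => le_liminf_of_le (by isBoundedDefault)
          ((h (-z + x)).mono fun ρ hρ => mul_le_mul_right hρ _)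
    _ ≤ liminf (fun ρ => (ballKernel μ r ⋆ₗ[μ] G ρ) x) (𝓝[>] 0) :=
        lintegral_liminf_le fun ρ => by fun_prop
    _ ≤ limsup (fun ρ => (ballKernel μ r ⋆ₗ[μ] G ρ) x) (𝓝[>] 0) := liminf_le_limsup
    _ = limsup (fun ρ => segmentLIntegral T ν (ballKernel μ ρ ⋆ₗ[μ] f ⋆ₗ[μ] ballKernel μ r) x)
          (𝓝[>] 0) := by
        simp only [G, lconvolution_segmentLIntegral_comm hf (measurable_ballKernel _)
          (measurable_ballKernel r)]
    _ ≤ G r x := limsup_segmentLIntegral_ballKernel_lconvolution_le hfM hM hr x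

end ApproximateIdentity

section Kappa

variable {d : ℕ} {r : ℝ}

theorem kappa_nonneg (r : ℝ) (x : EuclideanSpace ℝ (Fin d)) : 0 ≤ kappa d r x := by
  unfold kappa
  split_ifs with hx
  · have hr : 0 < r := (norm_nonneg x).trans_lt hx
    positivity
  · exact le_rfl

theorem measurable_kappa (r : ℝ) : Measurable (kappa d r) :=
  Measurable.ite (measurableSet_lt measurable_norm measurable_const) measurable_const
    measurable_const

theorem ofReal_kappa (hr : 0 < r) (x : EuclideanSpace ℝ (Fin d)) :
    ENNReal.ofReal (kappa d r x) = ballKernel volume r x := by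
  have hV : volume (ball (0 : EuclideanSpace ℝ (Fin d)) 1) ≠ ∞ := measure_ball_lt_top.ne
  have hconst : ENNReal.ofReal ((volume (ball (0 : EuclideanSpace ℝ (Fin d)) 1)).toReal * r ^ d)⁻¹
      = (volume (ball (0 : EuclideanSpace ℝ (Fin d)) r))⁻¹ := by
    rw [Measure.addHaar_ball_of_pos _ _ hr, finrank_euclideanSpace_fin,
      ENNReal.ofReal_inv_of_pos (mul_pos (ENNReal.toReal_pos (measure_ball_pos _ _ one_pos).ne' hV)
        (pow_pos hr d)), ENNReal.ofReal_mul ENNReal.toReal_nonneg, ENNReal.ofReal_toReal hV,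
      mul_comm]
  simp only [kappa, ballKernel, indicator, mem_ball_zero_iff]
  split_ifs
  · exact hconst
  · exact ENNReal.ofReal_zero

variable {b : EuclideanSpace ℝ (Fin d) → ℝ}

theorem convK_eq_toReal (hb : Measurable b) (hbnn : ∀ x, 0 ≤ b x) (hr : 0 < r)
    (x : EuclideanSpace ℝ (Fin d)) :
    convK b r x = (((ENNReal.ofReal ∘ b) ⋆ₗ ballKernel volume r) x).toReal := by
  rw [convK, integral_eq_lintegral_of_nonneg_ae
    (ae_of_all _ fun y => mul_nonneg (hbnn y) (kappa_nonneg r _))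
    (hb.mul ((measurable_kappa r).comp (by fun_prop))).aestronglyMeasurable, lconvolution_def]
  congr 1
  refine lintegral_congr fun y => ?_
  rw [ENNReal.ofReal_mul (hbnn y), ofReal_kappa hr, neg_add_eq_sub, Function.comp_apply]

theorem le_avgSeg_iff (hb : Measurable b) (hbnn : ∀ x, 0 ≤ b x) {M : ℝ≥0∞}
    (hbM : ∀ᵐ y, ENNReal.ofReal (b y) ≤ M) (hM : M ≠ ∞) (hr : 0 < r) {T : ℝ} (hT : 0 < T)
    (x ν : EuclideanSpace ℝ (Fin d)) {c : ℝ} :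
    c ≤ avgSeg b r T x ν ↔ ENNReal.ofReal (2 * T * c)
      ≤ segmentLIntegral T ν ((ENNReal.ofReal ∘ b) ⋆ₗ ballKernel volume r) x := by
  have hF := lconvolution_ballKernel_le (f := ENNReal.ofReal ∘ b) hbM hr
  have hint : ∫ t in (-T)..T, convK b r (x + t • ν) = (segmentLIntegral T ν
      ((ENNReal.ofReal ∘ b) ⋆ₗ ballKernel volume r) x).toReal := by
    simp only [intervalIntegral.integral_of_le (by linarith : -T ≤ T),
      convK_eq_toReal hb hbnn hr]
    exact integral_toReal (by fun_prop) (ae_of_all _ fun t => (hF _).trans_lt hM.lt_top)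
  rw [avgSeg, hint, le_inv_mul_iff₀ (by positivity),
    ENNReal.ofReal_le_iff_le_toReal (segmentLIntegral_lt_top hF hM x).ne]

end Kappa

theorem stmt0_general {d : ℕ} (b : EuclideanSpace ℝ (Fin d) → ℝ)
    (hbmeas : Measurable b) (hbd : MemLp b ⊤ volume) (hbnn : ∀ x, 0 ≤ b x)
    (T c : ℝ) (hT : 0 < T)
    (h : ∀ x0 ν0 : EuclideanSpace ℝ (Fin d), ‖ν0‖ = 1 →
      c ≤ liminf (fun r => avgSeg b r T x0 ν0) (nhdsWithin 0 (Ioi 0))) :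
    ∀ x0 ν0 : EuclideanSpace ℝ (Fin d), ‖ν0‖ = 1 → ∀ r : ℝ, 0 < r →
      c ≤ avgSeg b r T x0 ν0 := by
  intro x0 ν0 hν r hr
  have hM : eLpNormEssSup b volume ≠ ∞ := by
    simpa [eLpNorm_exponent_top] using hbd.eLpNorm_lt_top.ne
  have hbM : ∀ᵐ y, ENNReal.ofReal (b y) ≤ eLpNormEssSup b volume :=
    ae_le_eLpNormEssSup.mono fun y hy => (Real.ofReal_le_enorm _).trans hy
  have hiff := fun {ρ} (hρ : 0 < ρ) x c => le_avgSeg_iff hbmeas hbnn hbM hM hρ hT x ν0 (c := c)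
  refine le_of_forall_lt_imp_le_of_dense fun c' hc' => (hiff hr x0 c').2 ?_
  refine le_segmentLIntegral_of_eventually_le (by fun_prop) hbM hM (fun x => ?_) hr x0
  have hpos : ∀ᶠ ρ in 𝓝[>] (0 : ℝ), 0 < ρ := self_mem_nhdsWithin
  have hbdd : IsBoundedUnder (· ≥ ·) (𝓝[>] 0) fun ρ => avgSeg b ρ T x ν0 :=
    isBoundedUnder_of_eventually_ge (hpos.mono fun ρ hρ => (hiff hρ x 0).2 (by simp))
  filter_upwards [hpos, eventually_lt_of_lt_liminf (hc'.trans_le (h x ν0 hν)) hbdd]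
    with ρ hρ hlt
  exact (hiff hρ x c').1 hlt.le

theorem stmt0 {d : ℕ} (b : EuclideanSpace ℝ (Fin d) → ℝ)
    (hbmeas : Measurable b) (hbd : MemLp b ⊤ volume) (hbnn : ∀ x, 0 ≤ b x)
    (T c : ℝ) (hT : 0 < T) (hc : 0 < c)
    (h : ∀ x0 ν0 : EuclideanSpace ℝ (Fin d), ‖ν0‖ = 1 →
      c ≤ liminf (fun r => avgSeg b r T x0 ν0) (nhdsWithin 0 (Ioi 0))) :
    ∀ x0 ν0 : EuclideanSpace ℝ (Fin d), ‖ν0‖ = 1 → ∀ r : ℝ, 0 < r →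
      c ≤ avgSeg b r T x0 ν0 :=
  stmt0_general b hbmeas hbd hbnn T c hT h
end

section
/- Let μ be a finite non-negative measure on ℝ^d × ℝ^d supported in {(x,ξ) : |ξ| ≥ r} for some r > 0, and invariant under φ^t(x,ξ) = (x + tξ, ξ) for all t. Then for any a ∈ C_c(ℝ^d × ℝ^d) supported in {|x| ≤ R} × ℝ^d, one has |∫ a dμ| ≤ (R/(T r)) ‖a‖_∞ μ(ℝ^{2d}) for every T > 0; consequently ∫ a dμ = 0 and μ = 0. -/
open MeasureTheory Metric Filter Set

lemma timeset_bound {E : Type*} [NormedAddCommGroup E] [NormedSpace ℝ E]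
    (x ξ : E) (r R' : ℝ) (hr : 0 < r) (hR' : 0 ≤ R') (hξ : r ≤ ‖ξ‖) :
    volume {t : ℝ | ‖x + t • ξ‖ ≤ R'} ≤ ENNReal.ofReal (2 * R' / r) := by
  set S := {t : ℝ | ‖x + t • ξ‖ ≤ R'} with hS
  rcases S.eq_empty_or_nonempty with h | ⟨t0, ht0⟩
  · simp [h]
  have hξ0 : (0:ℝ) < ‖ξ‖ := lt_of_lt_of_le hr hξ
  have hdiff : ∀ s ∈ S, ∀ t ∈ S, t - s ≤ 2 * R' / ‖ξ‖ := by
    intro s hs t ht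
    have h1 : ‖(t - s) • ξ‖ ≤ 2 * R' := by
      have he : (t - s) • ξ = (x + t • ξ) - (x + s • ξ) := by
        rw [sub_smul]; abel
      rw [he]
      have := norm_sub_le (x + t • ξ) (x + s • ξ)
      have hs' : ‖x + s • ξ‖ ≤ R' := hs
      have ht' : ‖x + t • ξ‖ ≤ R' := ht
      linarith
    rw [norm_smul, Real.norm_eq_abs] at h1
    rw [le_div_iff₀ hξ0]
    nlinarith [le_abs_self (t - s), hξ0.le]
  have hbb : BddBelow S := ⟨t0 - 2 * R' / ‖ξ‖, fun s hs => by
    have := hdiff s hs t0 ht0; linarith⟩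
  have hba : BddAbove S := ⟨t0 + 2 * R' / ‖ξ‖, fun t ht => by
    have := hdiff t0 ht0 t ht; linarith⟩
  have hsub : S ⊆ Icc (sInf S) (sSup S) := fun t ht =>
    ⟨csInf_le hbb ht, le_csSup hba ht⟩
  have hlen : sSup S - sInf S ≤ 2 * R' / ‖ξ‖ := by
    have h2 : sSup S ≤ sInf S + 2 * R' / ‖ξ‖ := by
      apply csSup_le ⟨t0, ht0⟩
      intro t ht
      have h3 : t - 2 * R' / ‖ξ‖ ≤ sInf S := by
        apply le_csInf ⟨t0, ht0⟩
        intro s hs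
        have := hdiff s hs t ht; linarith
      linarith
    linarith
  calc volume S ≤ volume (Icc (sInf S) (sSup S)) := measure_mono hsub
    _ = ENNReal.ofReal (sSup S - sInf S) := Real.volume_Icc
    _ ≤ ENNReal.ofReal (2 * R' / r) := by
        apply ENNReal.ofReal_le_ofReal
        refine hlen.trans ?_
        gcongr

lemma key_bound {d : ℕ}
    (μ : Measure (EuclideanSpace ℝ (Fin d) × EuclideanSpace ℝ (Fin d)))
    [IsFiniteMeasure μ] (r : ℝ) (hr : 0 < r)
    (hsupp : μ {p | ¬ r ≤ ‖p.2‖} = 0)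
    (hinv : ∀ t : ℝ, Measure.map (fun p => (p.1 + t • p.2, p.2)) μ = μ)
    (R' T : ℝ) (hR' : 0 ≤ R') (hT : 0 < T) :
    (μ {p | ‖p.1‖ ≤ R'}).toReal * (2 * T) ≤ (2 * R' / r) * (μ Set.univ).toReal := by
  set P := EuclideanSpace ℝ (Fin d) × EuclideanSpace ℝ (Fin d)
  set A : Set P := {p | ‖p.1‖ ≤ R'} with hA
  have hAmeas : MeasurableSet A :=
    (isClosed_le (continuous_fst.norm) continuous_const).measurableSet
  set Q : Set (ℝ × P) := {q | ‖q.2.1 + q.1 • q.2.2‖ ≤ R'} with hQ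
  have hQmeas : MeasurableSet Q := by
    apply isClosed_le _ continuous_const |>.measurableSet
    exact ((continuous_fst.comp continuous_snd).add
      (continuous_fst.smul (continuous_snd.comp continuous_snd))).norm
  have hFmeas : Measurable (fun q : ℝ × P => Q.indicator (fun _ => (1:ENNReal)) q) :=
    measurable_const.indicator hQmeas
  set f : ℝ → P → ENNReal := fun t p => Q.indicator (fun _ => (1:ENNReal)) (t, p) with hf
  have hswap :
      (∫⁻ t, (∫⁻ p, f t p ∂μ) ∂(volume.restrict (Icc (-T) T)))
        = ∫⁻ p, (∫⁻ t, f t p ∂(volume.restrict (Icc (-T) T))) ∂μ := by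
    apply lintegral_lintegral_swap
    have : Function.uncurry f = fun q : ℝ × P => Q.indicator (fun _ => (1:ENNReal)) q := by
      funext q; cases q; rfl
    rw [this]
    exact hFmeas.aemeasurable
  -- left side
  have hleft : (∫⁻ t, (∫⁻ p, f t p ∂μ) ∂(volume.restrict (Icc (-T) T)))
      = μ A * ENNReal.ofReal (2 * T) := by
    have hinner : ∀ t : ℝ, ∫⁻ p, f t p ∂μ = μ A := by
      intro t
      have h1 : ∫⁻ p, Q.indicator (fun _ => (1:ENNReal)) (t, p) ∂μ
          = μ ((fun p : P => (p.1 + t • p.2, p.2)) ⁻¹' A) := by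
        rw [← lintegral_indicator_one]
        · rfl
        · exact (isClosed_le (((continuous_fst).add
            ((continuous_const (y := t)).smul continuous_snd)).norm) continuous_const).measurableSet
      rw [h1]
      have h2 := hinv t
      have hφ : Measurable (fun p : P => (p.1 + t • p.2, p.2)) :=
        ((continuous_fst.add ((continuous_const (y := t)).smul continuous_snd)).prodMk
          continuous_snd).measurable
      rw [← Measure.map_apply hφ hAmeas, h2]
    simp only [hinner]
    rw [lintegral_const, Measure.restrict_apply MeasurableSet.univ, Set.univ_inter,
      Real.volume_Icc]
    congr 1
    ring_nf
  have hright : (∫⁻ p, (∫⁻ t, f t p ∂(volume.restrict (Icc (-T) T))) ∂μ)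
      ≤ ENNReal.ofReal (2 * R' / r) * μ Set.univ := by
    have hae : ∀ᵐ p ∂μ, r ≤ ‖p.2‖ := ae_iff.mpr hsupp
    calc (∫⁻ p, (∫⁻ t, f t p ∂(volume.restrict (Icc (-T) T))) ∂μ)
        ≤ ∫⁻ _, ENNReal.ofReal (2 * R' / r) ∂μ := by
          apply lintegral_mono_ae
          filter_upwards [hae] with p hp
          have hSmeas : MeasurableSet {t : ℝ | ‖p.1 + t • p.2‖ ≤ R'} :=
            (isClosed_le ((continuous_const.add
              (continuous_id.smul continuous_const)).norm) continuous_const).measurableSet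
          have h1 : (fun t => f t p)
              = fun t => ({t : ℝ | ‖p.1 + t • p.2‖ ≤ R'}).indicator (1 : ℝ → ENNReal) t := by
            funext t
            simp only [hf, Set.indicator_apply, hQ, Set.mem_setOf_eq, Pi.one_apply]
          rw [h1, lintegral_indicator_one hSmeas, Measure.restrict_apply hSmeas]
          calc volume ({t : ℝ | ‖p.1 + t • p.2‖ ≤ R'} ∩ Icc (-T) T)
              ≤ volume {t : ℝ | ‖p.1 + t • p.2‖ ≤ R'} :=
                measure_mono (Set.inter_subset_left)
            _ ≤ ENNReal.ofReal (2 * R' / r) := timeset_bound p.1 p.2 r R' hr hR' hp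
      _ = ENNReal.ofReal (2 * R' / r) * μ Set.univ := by rw [lintegral_const]
  rw [hleft] at hswap
  have hineq : μ A * ENNReal.ofReal (2 * T) ≤ ENNReal.ofReal (2 * R' / r) * μ Set.univ :=
    hswap ▸ hright
  have hne : ENNReal.ofReal (2 * R' / r) * μ Set.univ ≠ ⊤ :=
    ENNReal.mul_ne_top ENNReal.ofReal_ne_top (measure_ne_top μ _)
  have := ENNReal.toReal_mono hne hineq
  rw [ENNReal.toReal_mul, ENNReal.toReal_mul, ENNReal.toReal_ofReal (by linarith),
    ENNReal.toReal_ofReal (by positivity)] at this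
  exact this


lemma mul_le_forall_nonpos (x c : ℝ) (h : ∀ T : ℝ, 0 < T → x * T ≤ c) : x ≤ 0 := by
  by_contra hx
  push_neg at hx
  have hc : 0 ≤ c := by have := h 1 one_pos; nlinarith
  have := h ((c + 1) / x) (by positivity)
  rw [mul_div_cancel₀ _ (ne_of_gt hx)] at this
  linarith

theorem stmt2 {d : ℕ}
    (μ : Measure (EuclideanSpace ℝ (Fin d) × EuclideanSpace ℝ (Fin d)))
    [IsFiniteMeasure μ] (r : ℝ) (hr : 0 < r)
    (hsupp : μ {p | ¬ r ≤ ‖p.2‖} = 0)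
    (hinv : ∀ t : ℝ, Measure.map (fun p => (p.1 + t • p.2, p.2)) μ = μ)
    (a : EuclideanSpace ℝ (Fin d) × EuclideanSpace ℝ (Fin d) → ℝ)
    (ha : Continuous a) (hacpt : HasCompactSupport a)
    (R : ℝ) (hR : 0 < R)
    (hsuppa : Function.support a ⊆ {p | ‖p.1‖ ≤ R})
    (Ca : ℝ) (hCa : ∀ p, |a p| ≤ Ca) :
    (∀ T : ℝ, 0 < T →
      |∫ p, a p ∂μ| ≤ (R / (T * r)) * Ca * (μ Set.univ).toReal) ∧
    (∫ p, a p ∂μ) = 0 ∧ μ = 0 := by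
  have hCa0 : 0 ≤ Ca := le_trans (abs_nonneg _) (hCa (0, 0))
  set M : ℝ := (μ Set.univ).toReal with hM
  have hM0 : 0 ≤ M := ENNReal.toReal_nonneg
  -- measure of A_R' is zero-ish bound
  have hmeasA : ∀ R' : ℝ, MeasurableSet {p : EuclideanSpace ℝ (Fin d) × EuclideanSpace ℝ (Fin d) | ‖p.1‖ ≤ R'} := fun R' =>
    (isClosed_le (continuous_fst.norm) continuous_const).measurableSet
  have hint : Integrable a μ := ha.integrable_of_hasCompactSupport hacpt
  -- Part 1
  have part1 : ∀ T : ℝ, 0 < T →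
      |∫ p, a p ∂μ| ≤ (R / (T * r)) * Ca * M := by
    intro T hT
    have hkey := key_bound μ r hr hsupp hinv R T hR.le hT
    set m : ℝ := (μ {p : EuclideanSpace ℝ (Fin d) × EuclideanSpace ℝ (Fin d) | ‖p.1‖ ≤ R}).toReal with hm
    have hm0 : 0 ≤ m := ENNReal.toReal_nonneg
    have hmle : m ≤ R / (T * r) * M := by
      rw [div_mul_eq_mul_div, le_div_iff₀ (by positivity)]
      calc m * (T * r) = (m * (2 * T)) * (r / 2) := by ring
        _ ≤ ((2 * R / r) * M) * (r / 2) := by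
            apply mul_le_mul_of_nonneg_right hkey (by positivity)
        _ = R * M := by field_simp
    have habs : |∫ p, a p ∂μ| ≤ Ca * m := by
      calc |∫ p, a p ∂μ| ≤ ∫ p, |a p| ∂μ := by simpa [Real.norm_eq_abs] using norm_integral_le_integral_norm (μ := μ) a
        _ ≤ ∫ p, ({p : EuclideanSpace ℝ (Fin d) × EuclideanSpace ℝ (Fin d) | ‖p.1‖ ≤ R}).indicator (fun _ => Ca) p ∂μ := by
            apply integral_mono hint.abs ((integrable_const Ca).indicator (hmeasA R))
            intro p
            by_cases hp : p ∈ {p : EuclideanSpace ℝ (Fin d) × EuclideanSpace ℝ (Fin d) | ‖p.1‖ ≤ R}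
            · simp only [Set.indicator_of_mem hp]; exact hCa p
            · simp only [Set.indicator_of_notMem hp]
              have : a p = 0 := by
                by_contra h
                exact hp (hsuppa (Function.mem_support.mpr h))
              simp [this]
        _ = Ca * m := by
            rw [integral_indicator_const _ (hmeasA R), smul_eq_mul, hm, mul_comm]; rfl
    calc |∫ p, a p ∂μ| ≤ Ca * m := habs
      _ ≤ Ca * (R / (T * r) * M) := mul_le_mul_of_nonneg_left hmle hCa0
      _ = R / (T * r) * Ca * M := by ring
  refine ⟨part1, ?_, ?_⟩
  · -- Part 2
    have h0 : |∫ p, a p ∂μ| ≤ 0 := by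
      apply mul_le_forall_nonpos _ (R / r * Ca * M)
      intro T hT
      have := part1 T hT
      have h2 : R / (T * r) * Ca * M * T = R / r * Ca * M := by
        field_simp
      nlinarith [abs_nonneg (∫ p, a p ∂μ)]
    have := abs_nonneg (∫ p, a p ∂μ)
    exact abs_eq_zero.mp (le_antisymm h0 this)
  · -- Part 3
    have hAzero : ∀ n : ℕ, μ {p : EuclideanSpace ℝ (Fin d) × EuclideanSpace ℝ (Fin d) | ‖p.1‖ ≤ (n:ℝ)} = 0 := by
      intro n
      have hle : ((μ {p : EuclideanSpace ℝ (Fin d) × EuclideanSpace ℝ (Fin d) | ‖p.1‖ ≤ (n:ℝ)}).toReal) ≤ 0 := by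
        apply mul_le_forall_nonpos _ ((2 * (n:ℝ) / r) * M)
        intro T hT
        have := key_bound μ r hr hsupp hinv n (T / 2) (Nat.cast_nonneg n) (by positivity)
        calc (μ {p : EuclideanSpace ℝ (Fin d) × EuclideanSpace ℝ (Fin d) | ‖p.1‖ ≤ (n:ℝ)}).toReal * T
            = (μ {p : EuclideanSpace ℝ (Fin d) × EuclideanSpace ℝ (Fin d) | ‖p.1‖ ≤ (n:ℝ)}).toReal * (2 * (T / 2)) := by ring
          _ ≤ (2 * (n:ℝ) / r) * M := this
      have hge : 0 ≤ ((μ {p : EuclideanSpace ℝ (Fin d) × EuclideanSpace ℝ (Fin d) | ‖p.1‖ ≤ (n:ℝ)}).toReal) := ENNReal.toReal_nonneg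
      have h0 : (μ {p : EuclideanSpace ℝ (Fin d) × EuclideanSpace ℝ (Fin d) | ‖p.1‖ ≤ (n:ℝ)}).toReal = 0 := le_antisymm hle hge
      rcases (ENNReal.toReal_eq_zero_iff _).mp h0 with h | h
      · exact h
      · exact absurd h (measure_ne_top μ _)
    have huniv : μ Set.univ = 0 := by
      have hsub : (Set.univ : Set (EuclideanSpace ℝ (Fin d) × EuclideanSpace ℝ (Fin d))) ⊆ ⋃ n : ℕ, {p : EuclideanSpace ℝ (Fin d) × EuclideanSpace ℝ (Fin d) | ‖p.1‖ ≤ (n:ℝ)} := by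
        intro p _
        obtain ⟨n, hn⟩ := exists_nat_ge ‖p.1‖
        exact Set.mem_iUnion.mpr ⟨n, hn⟩
      have hle : μ Set.univ ≤ 0 :=
        calc μ Set.univ ≤ μ (⋃ n : ℕ, {p : EuclideanSpace ℝ (Fin d) × EuclideanSpace ℝ (Fin d) | ‖p.1‖ ≤ (n:ℝ)}) := measure_mono hsub
          _ ≤ ∑' n : ℕ, μ {p : EuclideanSpace ℝ (Fin d) × EuclideanSpace ℝ (Fin d) | ‖p.1‖ ≤ (n:ℝ)} := measure_iUnion_le _
          _ = 0 := by simp [hAzero]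
      exact le_antisymm hle zero_le
    exact Measure.measure_univ_eq_zero.mp huniv
end

section
/- Let V ∈ C²(ℝ^d) be non-negative with V(x) → +∞ as |x| → ∞ and ∇V(x) = o(V(x)^{3/4}) as |x| → ∞. Then there exists a non-increasing function ε : (0,∞) → (0,∞) with ε(λ) → 0 as λ → +∞ such that: for every λ ≥ 1 and every x_0 ∈ ℝ^d with V(x_0) ≤ λ², one has |V(x) − V(x_0)| ≤ |x − x_0| λ^{3/2} ε(λ) for all x in the closed ball of radius √λ centered at x_0. -/
open MeasureTheory Metric Filter Set

set_option maxHeartbeats 2000000 in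
theorem stmt5 {d : ℕ} (V : EuclideanSpace ℝ (Fin d) → ℝ)
    (hV2 : ContDiff ℝ 2 V) (hVnn : ∀ x, 0 ≤ V x)
    (hVconf : Tendsto V (cocompact _) atTop)
    (hVsub : Tendsto (fun x => ‖gradient V x‖ / (V x) ^ ((3 : ℝ) / 4))
      (cocompact _) (nhds 0)) :
    ∃ ε : ℝ → ℝ, (∀ lam, 0 < lam → 0 < ε lam) ∧ AntitoneOn ε (Set.Ioi 0) ∧
      Tendsto ε atTop (nhds 0) ∧
      ∀ lam : ℝ, 1 ≤ lam → ∀ x0, V x0 ≤ lam ^ 2 →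
        ∀ x ∈ Metric.closedBall x0 (Real.sqrt lam),
          |V x - V x0| ≤ ‖x - x0‖ * lam ^ ((3 : ℝ) / 2) * ε lam := by
  classical
    have hVc : Continuous V := hV2.continuous
  have hVd : Differentiable ℝ V := hV2.differentiable two_ne_zero
  set G : EuclideanSpace ℝ (Fin d) → ℝ := fun z => ‖fderiv ℝ V z‖ with hGdef
  have hGgrad : ∀ z, ‖gradient V z‖ = G z := by
    intro z
    simp only [hGdef, gradient]
    exact LinearIsometryEquiv.norm_map _ _
  have hGcont : Continuous G := (hV2.continuous_fderiv two_ne_zero).norm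
  have hGnn : ∀ z, 0 ≤ G z := fun z => norm_nonneg _
  -- sublevel sets are compact
  have hcpt : ∀ R : ℝ, IsCompact {z : EuclideanSpace ℝ (Fin d) | V z ≤ R} := by
    intro R
    have h1 : ∀ᶠ z in cocompact (EuclideanSpace ℝ (Fin d)), R < V z := hVconf.eventually (eventually_gt_atTop R)
    rcases mem_cocompact.mp h1 with ⟨K, hK, hsub⟩
    refine hK.of_isClosed_subset (isClosed_le hVc continuous_const) ?_
    intro z hz
    by_contra hzK
    exact absurd (hsub hzK) (by simpa using not_lt.mpr hz)
  -- sup of G over sublevel sets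
  set B : ℝ → ℝ := fun R => sSup (G '' {z : EuclideanSpace ℝ (Fin d) | V z ≤ R}) with hBdef
  have hBbdd : ∀ R, BddAbove (G '' {z : EuclideanSpace ℝ (Fin d) | V z ≤ R}) :=
    fun R => ((hcpt R).image hGcont).bddAbove
  have hBle : ∀ R z, V z ≤ R → G z ≤ B R := fun R z hz =>
    le_csSup (hBbdd R) ⟨z, hz, rfl⟩
  have hBnn : ∀ R, 0 ≤ B R := fun R =>
    Real.sSup_nonneg (by rintro _ ⟨z, -, rfl⟩; exact hGnn z)
  have hBmono : ∀ R S, R ≤ S → B R ≤ B S := by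
    intro R S hRS
    refine Real.sSup_le ?_ (hBnn S)
    rintro _ ⟨z, hz, rfl⟩
    exact hBle S z (hz.trans hRS)
  -- global bound G ≤ C0 (1+V)^{3/4}
  have hC0 : ∃ C0 : ℝ, 0 ≤ C0 ∧ ∀ z, G z ≤ C0 * (1 + V z) ^ ((3:ℝ)/4) := by
    have hev1 : ∀ᶠ z in cocompact (EuclideanSpace ℝ (Fin d)),
        ‖gradient V z‖ / (V z) ^ ((3:ℝ)/4) < 1 := hVsub.eventually (gt_mem_nhds one_pos)
    have hev2 : ∀ᶠ z in cocompact (EuclideanSpace ℝ (Fin d)), 1 < V z :=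
      hVconf.eventually (eventually_gt_atTop 1)
    rcases mem_cocompact.mp (hev1.and hev2) with ⟨K, hK, hsub⟩
    obtain ⟨M, hM⟩ := hK.exists_bound_of_continuousOn hGcont.continuousOn
    refine ⟨max M 1, le_trans zero_le_one (le_max_right _ _), fun z => ?_⟩
    have hA : (0:ℝ) < 1 + V z := by linarith [hVnn z]
    have hpow1 : (1:ℝ) ≤ (1 + V z) ^ ((3:ℝ)/4) :=
      Real.one_le_rpow (by linarith [hVnn z]) (by norm_num)
    have hmax1 : (0:ℝ) ≤ max M 1 := le_trans zero_le_one (le_max_right _ _)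
    by_cases hz : z ∈ K
    · have h1 : G z ≤ M := by
        have := hM z hz
        rwa [Real.norm_eq_abs, abs_of_nonneg (hGnn z)] at this
      calc G z ≤ max M 1 := h1.trans (le_max_left _ _)
        _ = max M 1 * 1 := (mul_one _).symm
        _ ≤ max M 1 * (1 + V z) ^ ((3:ℝ)/4) := mul_le_mul_of_nonneg_left hpow1 hmax1
    · obtain ⟨h1, h2⟩ := hsub hz
      have hVpos : (0:ℝ) < V z := lt_trans one_pos h2
      have hp : (0:ℝ) < (V z) ^ ((3:ℝ)/4) := Real.rpow_pos_of_pos hVpos _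
      have h3 : ‖gradient V z‖ < (V z) ^ ((3:ℝ)/4) := (div_lt_one hp).mp h1
      rw [hGgrad] at h3
      have h4 : (V z) ^ ((3:ℝ)/4) ≤ (1 + V z) ^ ((3:ℝ)/4) :=
        Real.rpow_le_rpow hVpos.le (by linarith) (by norm_num)
      calc G z ≤ (1 + V z) ^ ((3:ℝ)/4) := le_trans h3.le h4
        _ = 1 * (1 + V z) ^ ((3:ℝ)/4) := (one_mul _).symm
        _ ≤ max M 1 * (1 + V z) ^ ((3:ℝ)/4) :=
            mul_le_mul_of_nonneg_right (le_max_right _ _) (by positivity)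
  obtain ⟨C0, hC0nn, hC0le⟩ := hC0
  -- h := (1+V)^{1/4} is Lipschitz with constant C0/4
  have hLip : ∀ x y : EuclideanSpace ℝ (Fin d), |(1 + V x) ^ ((1:ℝ)/4) - (1 + V y) ^ ((1:ℝ)/4)| ≤ (C0/4) * ‖x - y‖ := by
    have hderiv : ∀ z : EuclideanSpace ℝ (Fin d),
        HasFDerivAt (fun w => (1 + V w) ^ ((1:ℝ)/4))
          ((((1:ℝ)/4) * (1 + V z) ^ ((1:ℝ)/4 - 1)) • fderiv ℝ V z) z := by
      intro z
      have hA : (0:ℝ) < 1 + V z := by linarith [hVnn z]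
      have h1 : HasFDerivAt (fun w => 1 + V w) (fderiv ℝ V z) z :=
        ((hVd z).hasFDerivAt).const_add 1
      have h2 : HasDerivAt (fun y : ℝ => y ^ ((1:ℝ)/4))
          (((1:ℝ)/4) * (1 + V z) ^ ((1:ℝ)/4 - 1)) (1 + V z) := by
        simpa [mul_comm] using Real.hasDerivAt_rpow_const (x := 1 + V z) (p := (1:ℝ)/4)
          (Or.inl (ne_of_gt hA))
      exact h2.comp_hasFDerivAt z h1
    have hbound : ∀ z : EuclideanSpace ℝ (Fin d),
        ‖(((1:ℝ)/4) * (1 + V z) ^ ((1:ℝ)/4 - 1)) • fderiv ℝ V z‖ ≤ C0/4 := by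
      intro z
      have hA : (0:ℝ) < 1 + V z := by linarith [hVnn z]
      rw [norm_smul, Real.norm_eq_abs, abs_of_nonneg (by positivity)]
      have h3 : ((1:ℝ)/4) * (1 + V z) ^ ((1:ℝ)/4 - 1) * ‖fderiv ℝ V z‖
          ≤ ((1:ℝ)/4) * (1 + V z) ^ ((1:ℝ)/4 - 1) * (C0 * (1 + V z) ^ ((3:ℝ)/4)) :=
        mul_le_mul_of_nonneg_left (hC0le z) (by positivity)
      refine h3.trans (le_of_eq ?_)
      have h4 : (1 + V z) ^ ((1:ℝ)/4 - 1) * (1 + V z) ^ ((3:ℝ)/4) = 1 := by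
        rw [← Real.rpow_add hA]
        norm_num
      calc ((1:ℝ)/4) * (1 + V z) ^ ((1:ℝ)/4 - 1) * (C0 * (1 + V z) ^ ((3:ℝ)/4))
          = (C0/4) * ((1 + V z) ^ ((1:ℝ)/4 - 1) * (1 + V z) ^ ((3:ℝ)/4)) := by ring
        _ = C0/4 := by rw [h4, mul_one]
    intro x y
    have := convex_univ.norm_image_sub_le_of_norm_hasFDerivWithin_le
      (fun z _ => (hderiv z).hasFDerivWithinAt) (fun z _ => hbound z)
      (Set.mem_univ y) (Set.mem_univ x)
    simpa [Real.norm_eq_abs] using this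
  set c : ℝ := 2 ^ ((1:ℝ)/4) + C0 / 4 with hcdef
  have hc1 : 1 ≤ c := by
    have : (1:ℝ) ≤ 2 ^ ((1:ℝ)/4) := Real.one_le_rpow one_le_two (by norm_num)
    have := hC0nn; simp only [hcdef]; linarith
  set K0 : ℝ := c ^ 4 with hK0def
  have hK0_1 : 1 ≤ K0 := one_le_pow₀ hc1
  -- a priori bound on the ball
  have hapriori : ∀ lam : ℝ, 1 ≤ lam → ∀ x0 : EuclideanSpace ℝ (Fin d), V x0 ≤ lam ^ 2 →
      ∀ x ∈ Metric.closedBall x0 (Real.sqrt lam), V x ≤ K0 * lam ^ 2 := by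
    intro lam hlam x0 hx0 x hx
    have hlam0 : (0:ℝ) < lam := by linarith
    have hd : ‖x - x0‖ ≤ Real.sqrt lam := by
      rw [← dist_eq_norm]; exact Metric.mem_closedBall.mp hx
    have hsq : (0:ℝ) ≤ Real.sqrt lam := Real.sqrt_nonneg _
    have h1 : (1 + V x) ^ ((1:ℝ)/4) ≤ (1 + V x0) ^ ((1:ℝ)/4) + (C0/4) * Real.sqrt lam := by
      have ha := hLip x x0
      have hb : (C0/4) * ‖x - x0‖ ≤ (C0/4) * Real.sqrt lam :=
        mul_le_mul_of_nonneg_left hd (by positivity)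
      have hc := le_abs_self ((1 + V x) ^ ((1:ℝ)/4) - (1 + V x0) ^ ((1:ℝ)/4))
      linarith
    have h2 : (1 + V x0) ^ ((1:ℝ)/4) ≤ (2 * lam ^ 2) ^ ((1:ℝ)/4) := by
      refine Real.rpow_le_rpow (by linarith [hVnn x0]) ?_ (by norm_num)
      nlinarith
    have h3 : (2 * lam ^ 2) ^ ((1:ℝ)/4) = 2 ^ ((1:ℝ)/4) * Real.sqrt lam := by
      rw [Real.mul_rpow (by norm_num) (by positivity)]
      congr 1
      rw [Real.sqrt_eq_rpow, ← Real.rpow_natCast lam 2, ← Real.rpow_mul hlam0.le]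
      norm_num
    have h4 : (1 + V x) ^ ((1:ℝ)/4) ≤ c * Real.sqrt lam := by
      have : c * Real.sqrt lam = 2 ^ ((1:ℝ)/4) * Real.sqrt lam + (C0/4) * Real.sqrt lam := by
        rw [hcdef]; ring
      rw [this, ← h3]
      linarith
    have h5 : 1 + V x ≤ (c * Real.sqrt lam) ^ 4 := by
      have hnn : (0:ℝ) ≤ 1 + V x := by linarith [hVnn x]
      have h6 := pow_le_pow_left₀ (Real.rpow_nonneg hnn _) h4 4
      have h7 : ((1 + V x) ^ ((1:ℝ)/4)) ^ (4:ℕ) = 1 + V x := by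
        rw [← Real.rpow_natCast ((1 + V x) ^ ((1:ℝ)/4)) 4, ← Real.rpow_mul hnn]
        norm_num
      rwa [h7] at h6
    have h8 : (c * Real.sqrt lam) ^ 4 = K0 * lam ^ 2 := by
      rw [mul_pow, hK0def]
      congr 1
      have h9 : Real.sqrt lam ^ 4 = (Real.sqrt lam ^ 2) ^ 2 := by ring
      rw [h9, Real.sq_sqrt hlam0.le]
    linarith [h5, h8.le, h8.ge]
  -- mean value estimate on the ball
  have hmain : ∀ lam : ℝ, 1 ≤ lam → ∀ x0 : EuclideanSpace ℝ (Fin d), V x0 ≤ lam ^ 2 →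
      ∀ x ∈ Metric.closedBall x0 (Real.sqrt lam),
        |V x - V x0| ≤ B (K0 * lam ^ 2) * ‖x - x0‖ := by
    intro lam hlam x0 hx0 x hx
    have hball : Convex ℝ (Metric.closedBall x0 (Real.sqrt lam)) := convex_closedBall _ _
    have h0 : x0 ∈ Metric.closedBall x0 (Real.sqrt lam) :=
      Metric.mem_closedBall_self (Real.sqrt_nonneg _)
    have := hball.norm_image_sub_le_of_norm_hasFDerivWithin_le
      (f' := fun z => fderiv ℝ V z)
      (fun z _ => (hVd z).hasFDerivAt.hasFDerivWithinAt)
      (fun z hz => hBle _ z (hapriori lam hlam x0 hx0 z hz)) h0 hx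
    simpa [Real.norm_eq_abs] using this
  -- D and its limit
  set D : ℝ → ℝ := fun lam => B (K0 * lam ^ 2) / lam ^ ((3:ℝ)/2) with hDdef
  have hDnn : ∀ lam : ℝ, 1 ≤ lam → 0 ≤ D lam := by
    intro lam hlam
    exact div_nonneg (hBnn _) (Real.rpow_nonneg (by linarith) _)
  have hD0 : ∀ η : ℝ, 0 < η → ∃ N : ℝ, 1 ≤ N ∧ ∀ lam, N ≤ lam → D lam < η := by
    intro η hη
    have hK0pos : (0:ℝ) < K0 := lt_of_lt_of_le one_pos hK0_1
    have hK034 : (0:ℝ) < K0 ^ ((3:ℝ)/4) := Real.rpow_pos_of_pos hK0pos _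
    set η' : ℝ := η / (2 * K0 ^ ((3:ℝ)/4)) with hη'def
    have hη'pos : 0 < η' := by positivity
    have hev1 : ∀ᶠ z in cocompact (EuclideanSpace ℝ (Fin d)),
        ‖gradient V z‖ / (V z) ^ ((3:ℝ)/4) < η' := hVsub.eventually (gt_mem_nhds hη'pos)
    have hev2 : ∀ᶠ z in cocompact (EuclideanSpace ℝ (Fin d)), 1 < V z :=
      hVconf.eventually (eventually_gt_atTop 1)
    rcases mem_cocompact.mp (hev1.and hev2) with ⟨K, hK, hsub⟩
    obtain ⟨M0, hM0⟩ := hK.exists_bound_of_continuousOn hGcont.continuousOn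
    set M : ℝ := max M0 0 with hMdef
    have hMnn : (0:ℝ) ≤ M := le_max_right _ _
    have hBest : ∀ lam : ℝ, 1 ≤ lam →
        B (K0 * lam ^ 2) ≤ M + η' * K0 ^ ((3:ℝ)/4) * lam ^ ((3:ℝ)/2) := by
      intro lam hlam
      have hlam0 : (0:ℝ) < lam := by linarith
      refine Real.sSup_le ?_ (by positivity)
      rintro _ ⟨z, hz, rfl⟩
      have hzV : V z ≤ K0 * lam ^ 2 := hz
      by_cases hzK : z ∈ K
      · have h1 : G z ≤ M0 := by
          have := hM0 z hzK
          rwa [Real.norm_eq_abs, abs_of_nonneg (hGnn z)] at this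
        have : G z ≤ M := h1.trans (le_max_left _ _)
        nlinarith [Real.rpow_pos_of_pos hlam0 ((3:ℝ)/2), hη'pos.le, hK034.le,
          mul_nonneg (mul_nonneg hη'pos.le hK034.le) (Real.rpow_pos_of_pos hlam0 ((3:ℝ)/2)).le]
      · obtain ⟨h1, h2⟩ := hsub hzK
        have hVpos : (0:ℝ) < V z := lt_trans one_pos h2
        have h3 : G z < η' * (V z) ^ ((3:ℝ)/4) := by
          rw [← hGgrad]
          exact (div_lt_iff₀ (Real.rpow_pos_of_pos hVpos _)).mp h1
        have h4 : (V z) ^ ((3:ℝ)/4) ≤ (K0 * lam ^ 2) ^ ((3:ℝ)/4) :=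
          Real.rpow_le_rpow hVpos.le hzV (by norm_num)
        have h5 : (K0 * lam ^ 2) ^ ((3:ℝ)/4) = K0 ^ ((3:ℝ)/4) * lam ^ ((3:ℝ)/2) := by
          rw [Real.mul_rpow hK0pos.le (by positivity)]
          congr 1
          rw [← Real.rpow_natCast lam 2, ← Real.rpow_mul hlam0.le]
          norm_num
        have h6 : η' * (V z) ^ ((3:ℝ)/4) ≤ η' * (K0 ^ ((3:ℝ)/4) * lam ^ ((3:ℝ)/2)) := by
          rw [← h5]
          exact mul_le_mul_of_nonneg_left h4 hη'pos.le
        nlinarith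
    refine ⟨max 1 (2 * M / η + 1), le_max_left _ _, fun lam hlam => ?_⟩
    have hlam1 : 1 ≤ lam := le_trans (le_max_left _ _) hlam
    have hlam0 : (0:ℝ) < lam := by linarith
    have hpow : (0:ℝ) < lam ^ ((3:ℝ)/2) := Real.rpow_pos_of_pos hlam0 _
    have hDle : D lam ≤ M / lam ^ ((3:ℝ)/2) + η' * K0 ^ ((3:ℝ)/4) := by
      simp only [hDdef]
      rw [div_le_iff₀ hpow]
      have hexp : (M / lam ^ ((3:ℝ)/2) + η' * K0 ^ ((3:ℝ)/4)) * lam ^ ((3:ℝ)/2)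
          = M + η' * K0 ^ ((3:ℝ)/4) * lam ^ ((3:ℝ)/2) := by
        field_simp
      rw [hexp]
      exact hBest lam hlam1
    have hKne : K0 ^ ((3:ℝ)/4) ≠ 0 := ne_of_gt hK034
    have hη'K : η' * K0 ^ ((3:ℝ)/4) = η/2 := by
      rw [hη'def, div_mul_eq_mul_div, mul_comm (2:ℝ) (K0 ^ ((3:ℝ)/4)), ← div_div,
        mul_div_assoc, div_self hKne, mul_one]
    have hl32 : lam ≤ lam ^ ((3:ℝ)/2) := by
      have := Real.rpow_le_rpow_of_exponent_le hlam1 (by norm_num : (1:ℝ) ≤ (3:ℝ)/2)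
      rwa [Real.rpow_one] at this
    have hMl : M / lam ^ ((3:ℝ)/2) < η/2 := by
      rw [div_lt_iff₀ hpow]
      have hlge : 2 * M / η + 1 ≤ lam := le_trans (le_max_right _ _) hlam
      have h7 : 2 * M / η * η = 2 * M := div_mul_cancel₀ _ (ne_of_gt hη)
      have h8 : η/2 * (2 * M / η + 1) ≤ η/2 * lam :=
        mul_le_mul_of_nonneg_left hlge (by linarith)
      have h9 : η/2 * lam ≤ η/2 * lam ^ ((3:ℝ)/2) :=
        mul_le_mul_of_nonneg_left hl32 (by linarith)
      nlinarith [h7, h8, h9, hη]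
    linarith
  obtain ⟨N1, hN1_1, hN1⟩ := hD0 1 one_pos
  have hDb : ∀ lam : ℝ, 1 ≤ lam → D lam ≤ max 1 (B (K0 * N1 ^ 2)) := by
    intro lam hlam
    rcases le_or_gt N1 lam with h | h
    · exact (hN1 lam h).le.trans (le_max_left _ _)
    · refine le_trans ?_ (le_max_right _ _)
      have h1 : D lam ≤ B (K0 * lam ^ 2) := by
        simp only [hDdef]
        exact div_le_self (hBnn _) (Real.one_le_rpow hlam (by norm_num))
      refine h1.trans (hBmono _ _ ?_)
      have : lam ^ 2 ≤ N1 ^ 2 := by nlinarith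
      nlinarith [hK0_1]
  set Mb : ℝ := max 1 (B (K0 * N1 ^ 2)) with hMbdef
  -- the epsilon function
  set m : ℝ → ℝ := fun lam => max lam 1 with hmdef
  have hm1 : ∀ lam, 1 ≤ m lam := fun lam => le_max_right _ _
  set ε : ℝ → ℝ := fun lam => sSup (D '' Set.Ici (m lam)) + (m lam)⁻¹ with hεdef
  have hbddε : ∀ lam : ℝ, BddAbove (D '' Set.Ici (m lam)) := by
    intro lam
    refine ⟨Mb, ?_⟩
    rintro _ ⟨μ, hμ, rfl⟩
    exact hDb μ ((hm1 lam).trans hμ)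
  have hne : ∀ lam : ℝ, (D '' Set.Ici (m lam)).Nonempty :=
    fun lam => ⟨D (m lam), ⟨m lam, Set.mem_Ici.mpr le_rfl, rfl⟩⟩
  have hsSup_nn : ∀ lam : ℝ, 0 ≤ sSup (D '' Set.Ici (m lam)) := by
    intro lam
    refine Real.sSup_nonneg ?_
    rintro _ ⟨μ, hμ, rfl⟩
    exact hDnn μ ((hm1 lam).trans hμ)
  refine ⟨ε, ?_, ?_, ?_, ?_⟩
  · -- positivity
    intro lam _
    have : 0 < (m lam)⁻¹ := inv_pos.mpr (lt_of_lt_of_le one_pos (hm1 lam))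
    have := hsSup_nn lam
    simp only [hεdef]; linarith
  · -- antitone
    intro a _ b _ hab
    have hmab : m a ≤ m b := max_le_max hab le_rfl
    have h1 : sSup (D '' Set.Ici (m b)) ≤ sSup (D '' Set.Ici (m a)) :=
      csSup_le_csSup (hbddε a) (hne b) (Set.image_mono (Set.Ici_subset_Ici.mpr hmab))
    have h2 : (m b)⁻¹ ≤ (m a)⁻¹ :=
      inv_anti₀ (lt_of_lt_of_le one_pos (hm1 a)) hmab
    simp only [hεdef]; linarith
  · -- tendsto 0
    rw [Metric.tendsto_atTop]
    intro η hη
    obtain ⟨N0, hN0_1, hN0⟩ := hD0 (η/2) (by linarith)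
    refine ⟨max N0 (2/η + 1), fun lam hlam => ?_⟩
    have hlamN0 : N0 ≤ lam := (le_max_left _ _).trans hlam
    have hlam1 : 1 ≤ lam := hN0_1.trans hlamN0
    have hmeq : m lam = lam := max_eq_left hlam1
    have h1 : sSup (D '' Set.Ici (m lam)) ≤ η/2 := by
      refine csSup_le (hne lam) ?_
      rintro _ ⟨μ, hμ, rfl⟩
      rw [hmeq] at hμ
      exact (hN0 μ (hlamN0.trans hμ)).le
    have h2 : (m lam)⁻¹ < η/2 := by
      rw [hmeq]
      have h3 : 2/η + 1 ≤ lam := (le_max_right _ _).trans hlam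
      have h4 : 2/η < lam := by linarith
      have h5 : 0 < lam := by positivity
      have h6 : 2 < lam * η := (div_lt_iff₀ hη).mp h4
      have h7 : 0 < lam⁻¹ := inv_pos.mpr h5
      have h8 : 2 * lam⁻¹ < lam * η * lam⁻¹ := mul_lt_mul_of_pos_right h6 h7
      rw [mul_comm lam η, mul_assoc, mul_inv_cancel₀ (ne_of_gt h5), mul_one] at h8
      have h9 : lam⁻¹ ≤ 2 * lam⁻¹ := by linarith
      linarith
    have hεnn : 0 ≤ ε lam := by
      have := hsSup_nn lam
      have : (0:ℝ) ≤ (m lam)⁻¹ := inv_nonneg.mpr (by linarith [hm1 lam])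
      simp only [hεdef]; positivity
    rw [Real.dist_eq, abs_sub_comm, abs_of_nonpos (by simp only [hεdef] at *; linarith)]
    simp only [hεdef] at *
    linarith
  · -- main estimate
    intro lam hlam x0 hx0 x hx
    have hmeq : m lam = lam := max_eq_left hlam
    have hDle : D lam ≤ ε lam := by
      have h1 : D lam ≤ sSup (D '' Set.Ici (m lam)) :=
        le_csSup (hbddε lam) ⟨lam, by rw [hmeq]; exact Set.mem_Ici.mpr le_rfl, rfl⟩
      have h2 : (0:ℝ) ≤ (m lam)⁻¹ := inv_nonneg.mpr (by linarith [hm1 lam])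
      simp only [hεdef]; linarith
    have hpow : (0:ℝ) < lam ^ ((3:ℝ)/2) := Real.rpow_pos_of_pos (by linarith) _
    have hBeq : B (K0 * lam ^ 2) = D lam * lam ^ ((3:ℝ)/2) := by
      simp only [hDdef]
      rw [div_mul_cancel₀ _ (ne_of_gt hpow)]
    calc |V x - V x0| ≤ B (K0 * lam ^ 2) * ‖x - x0‖ := hmain lam hlam x0 hx0 x hx
      _ = ‖x - x0‖ * lam ^ ((3:ℝ)/2) * D lam := by rw [hBeq]; ring
      _ ≤ ‖x - x0‖ * lam ^ ((3:ℝ)/2) * ε lam := by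
          apply mul_le_mul_of_nonneg_left hDle
          positivity
end

section
/- Let V ∈ C²(ℝ^d) be non-negative, confining and strictly sub-quartic (so that the conclusion of the growth lemma holds with a function ε(λ) → 0). Let k ∈ C_c^∞(ℝ^d) be non-negative with ‖k‖_{L²} = 1 and supp k ⊂ B_1(0). There exist C > 0 and M > 0 such that for every x_0 with |x_0| ≥ M, setting λ = √(V(x_0)), every R ∈ [1, λ], and u(x) = r^{-d/2} k((x−x_0)/r) with r = R/√λ, one has ‖u‖_{L²} = 1 and ‖(V − (1/2)Δ − λ²) u‖_{L²} ≤ C λ (1/R² + R ε(λ)). -/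
open MeasureTheory Metric Filter Set
open scoped ENNReal NNReal

/-- The Laplacian of a function on `ℝ^d`, as the trace of its second derivative. -/
noncomputable def lap {d : ℕ} (f : EuclideanSpace ℝ (Fin d) → ℝ)
    (x : EuclideanSpace ℝ (Fin d)) : ℝ :=
  ∑ i : Fin d, iteratedFDeriv ℝ 2 f x
    ![EuclideanSpace.single i (1 : ℝ), EuclideanSpace.single i (1 : ℝ)]

lemma myIteratedFDeriv_comp_add {d : ℕ} {f : EuclideanSpace ℝ (Fin d) → ℝ} (hf : ContDiff ℝ (⊤ : ℕ∞) f)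
    (c : EuclideanSpace ℝ (Fin d)) (n : ℕ) (x : EuclideanSpace ℝ (Fin d)) :
    iteratedFDeriv ℝ n (fun y => f (y + c)) x = iteratedFDeriv ℝ n f (x + c) := by
  induction n generalizing x with
  | zero => ext m; simp
  | succ n IH =>
    have hfun : iteratedFDeriv ℝ n (fun y => f (y + c))
        = fun y => iteratedFDeriv ℝ n f (y + c) := funext fun y => IH y
    have hdiff : DifferentiableAt ℝ (iteratedFDeriv ℝ n f) (x + c) :=
      (hf.differentiable_iteratedFDeriv (by exact_mod_cast ENat.natCast_lt_top n)).differentiableAt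
    have h1 : HasFDerivAt (fun y : EuclideanSpace ℝ (Fin d) => y + c)
        (ContinuousLinearMap.id ℝ _) x := (hasFDerivAt_id x).add_const c
    have hD : HasFDerivAt (fun y => iteratedFDeriv ℝ n f (y + c))
        (fderiv ℝ (iteratedFDeriv ℝ n f) (x + c)) x := by
      have h := hdiff.hasFDerivAt.comp x h1
      rw [ContinuousLinearMap.comp_id] at h
      exact h
    rw [iteratedFDeriv_succ_eq_comp_left, iteratedFDeriv_succ_eq_comp_left]
    simp only [Function.comp_apply, hfun, hD.fderiv]

lemma lap_scale {d : ℕ} (k : EuclideanSpace ℝ (Fin d) → ℝ) (hk : ContDiff ℝ (⊤ : ℕ∞) k) (r c₀ : ℝ)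
    (x₀ x : EuclideanSpace ℝ (Fin d)) :
    lap (fun y => c₀ * k (r⁻¹ • (y - x₀))) x
      = c₀ * (r⁻¹ ^ 2 * lap k (r⁻¹ • (x - x₀))) := by
  set A : EuclideanSpace ℝ (Fin d) →L[ℝ] EuclideanSpace ℝ (Fin d) :=
    r⁻¹ • ContinuousLinearMap.id ℝ _ with hA
  set b : EuclideanSpace ℝ (Fin d) := -(r⁻¹ • x₀) with hb
  set k₁ : EuclideanSpace ℝ (Fin d) → ℝ := fun z => k (z + b) with hk₁def
  have hk₁ : ContDiff ℝ (⊤ : ℕ∞) k₁ := hk.comp (contDiff_id.add contDiff_const)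
  have heq : (fun y => c₀ * k (r⁻¹ • (y - x₀))) = c₀ • (k₁ ∘ A) := by
    funext y
    simp [k₁, hA, hb, smul_sub, sub_eq_add_neg, ContinuousLinearMap.smul_apply]
  have hAx : A x + b = r⁻¹ • (x - x₀) := by
    simp [hA, hb, smul_sub, sub_eq_add_neg]
  have key : ∀ m : Fin 2 → EuclideanSpace ℝ (Fin d),
      iteratedFDeriv ℝ 2 (fun y => c₀ * k (r⁻¹ • (y - x₀))) x m
        = c₀ * (iteratedFDeriv ℝ 2 k (r⁻¹ • (x - x₀)) (fun j => r⁻¹ • m j)) := by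
    intro m
    rw [heq]
    rw [iteratedFDeriv_const_smul_apply ((hk₁.comp A.contDiff).of_le (by exact WithTop.coe_le_coe.2 le_top)).contDiffAt]
    rw [A.iteratedFDeriv_comp_right hk₁ x (by exact WithTop.coe_le_coe.2 le_top)]
    simp only [ContinuousMultilinearMap.smul_apply,
      ContinuousMultilinearMap.compContinuousLinearMap_apply, smul_eq_mul]
    congr 1
    have hAm : (fun j => A (m j)) = fun j => r⁻¹ • m j := by
      funext j; simp [hA]
    rw [hAm]
    have := myIteratedFDeriv_comp_add hk b 2 (A x)
    rw [show iteratedFDeriv ℝ 2 k₁ (A x) = iteratedFDeriv ℝ 2 k (A x + b) from this, hAx]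
  have key2 : ∀ m : Fin 2 → EuclideanSpace ℝ (Fin d),
      iteratedFDeriv ℝ 2 k (r⁻¹ • (x - x₀)) (fun j => r⁻¹ • m j)
        = r⁻¹ ^ 2 * iteratedFDeriv ℝ 2 k (r⁻¹ • (x - x₀)) m := by
    intro m
    have := (iteratedFDeriv ℝ 2 k (r⁻¹ • (x - x₀))).map_smul_univ (fun _ => r⁻¹) m
    simpa [Finset.prod_const, smul_eq_mul] using this
  unfold lap
  simp only [key, key2, Finset.mul_sum, mul_assoc]

lemma eLpNorm_scale {d : ℕ} (f : EuclideanSpace ℝ (Fin d) → ℝ) (hf : Continuous f) {r : ℝ}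
    (hr : 0 < r) (x₀ : EuclideanSpace ℝ (Fin d)) :
    eLpNorm (fun x => f (r⁻¹ • (x - x₀))) 2 volume
      = ENNReal.ofReal (r ^ ((d : ℝ) / 2)) * eLpNorm f 2 volume := by
  have hT : Continuous (fun x : EuclideanSpace ℝ (Fin d) => r⁻¹ • (x - x₀)) := by fun_prop
  rw [eLpNorm_eq_lintegral_rpow_enorm_toReal (by norm_num) (by norm_num),
      eLpNorm_eq_lintegral_rpow_enorm_toReal (by norm_num) (by norm_num)]
  have hmap : Measure.map (fun x : EuclideanSpace ℝ (Fin d) => r⁻¹ • (x - x₀)) volume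
      = ENNReal.ofReal (r ^ d) • volume := by
    have h1 : (fun x : EuclideanSpace ℝ (Fin d) => r⁻¹ • (x - x₀))
        = (fun z : EuclideanSpace ℝ (Fin d) => r⁻¹ • z) ∘ (fun x => x + (-x₀)) := by
      funext x; simp [sub_eq_add_neg]
    rw [h1, ← Measure.map_map (by fun_prop) (by fun_prop),
        map_add_right_eq_self volume (-x₀),
        Measure.map_addHaar_smul volume (inv_ne_zero hr.ne')]
    congr 1
    rw [finrank_euclideanSpace_fin, ← inv_pow, inv_inv, abs_of_nonneg (pow_nonneg hr.le _)]
  have hint : ∫⁻ x, ‖f (r⁻¹ • (x - x₀))‖ₑ ^ (2:ℝ≥0∞).toReal ∂volume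
      = ENNReal.ofReal (r ^ d) * ∫⁻ y, ‖f y‖ₑ ^ (2:ℝ≥0∞).toReal ∂volume := by
    rw [← lintegral_map' (f := fun y => ‖f y‖ₑ ^ (2:ℝ≥0∞).toReal)
        (g := fun x : EuclideanSpace ℝ (Fin d) => r⁻¹ • (x - x₀))
        (by rw [hmap]; exact ((hf.measurable.enorm).pow_const _).aemeasurable)
        hT.measurable.aemeasurable, hmap, lintegral_smul_measure, smul_eq_mul]
  rw [hint, ENNReal.mul_rpow_of_nonneg _ _ (by positivity)]
  have h1 : ENNReal.ofReal (r ^ d) ^ (1 / (2:ℝ≥0∞).toReal) = ENNReal.ofReal (r ^ ((d:ℝ)/2)) := by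
    rw [ENNReal.ofReal_rpow_of_pos (by positivity)]
    congr 1
    rw [← Real.rpow_natCast r d, ← Real.rpow_mul hr.le]
    norm_num [mul_one_div]
  rw [h1]

set_option maxHeartbeats 2000000 in
theorem stmt8 {d : ℕ} (V : EuclideanSpace ℝ (Fin d) → ℝ)
    (hV2 : ContDiff ℝ 2 V) (hVnn : ∀ x, 0 ≤ V x)
    (hVconf : Tendsto V (cocompact _) atTop)
    (hVsub : Tendsto (fun x => ‖gradient V x‖ / (V x) ^ ((3 : ℝ) / 4))
      (cocompact _) (nhds 0))
    (ε : ℝ → ℝ) (hεpos : ∀ lam, 0 < lam → 0 < ε lam)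
    (hεlim : Tendsto ε atTop (nhds 0))
    (hεV : ∀ lam : ℝ, 1 ≤ lam → ∀ x0, V x0 ≤ lam ^ 2 →
      ∀ x ∈ Metric.closedBall x0 (Real.sqrt lam),
        |V x - V x0| ≤ ‖x - x0‖ * lam ^ ((3 : ℝ) / 2) * ε lam)
    (k : EuclideanSpace ℝ (Fin d) → ℝ)
    (hk : ContDiff ℝ (⊤ : ℕ∞) k) (hkc : HasCompactSupport k) (hknn : ∀ x, 0 ≤ k x)
    (hksupp : Function.support k ⊆ ball (0 : EuclideanSpace ℝ (Fin d)) 1)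
    (hknorm : eLpNorm k 2 volume = 1) :
    ∃ C > (0 : ℝ), ∃ M > (0 : ℝ), ∀ x0 : EuclideanSpace ℝ (Fin d), M ≤ ‖x0‖ →
      ∀ R : ℝ, 1 ≤ R → R ≤ Real.sqrt (V x0) →
        eLpNorm (fun x => (R / Real.sqrt (Real.sqrt (V x0))) ^ (-(d : ℝ) / 2) *
            k ((R / Real.sqrt (Real.sqrt (V x0)))⁻¹ • (x - x0))) 2 volume = 1 ∧
        eLpNorm (fun x =>
            V x * ((R / Real.sqrt (Real.sqrt (V x0))) ^ (-(d : ℝ) / 2) *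
              k ((R / Real.sqrt (Real.sqrt (V x0)))⁻¹ • (x - x0)))
            - (1 / 2) * lap (fun y => (R / Real.sqrt (Real.sqrt (V x0))) ^ (-(d : ℝ) / 2) *
                k ((R / Real.sqrt (Real.sqrt (V x0)))⁻¹ • (y - x0))) x
            - Real.sqrt (V x0) ^ 2 *
              ((R / Real.sqrt (Real.sqrt (V x0))) ^ (-(d : ℝ) / 2) *
                k ((R / Real.sqrt (Real.sqrt (V x0)))⁻¹ • (x - x0)))) 2 volume ≤
          ENNReal.ofReal (C * Real.sqrt (V x0) *
            (1 / R ^ 2 + R * ε (Real.sqrt (V x0)))) := by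
  classical
  -- properties of `lap k`
  have hlapc : Continuous (lap (d := d) k) := by
    have : lap (d := d) k =
        (fun A : ContinuousMultilinearMap ℝ (fun _ : Fin 2 => EuclideanSpace ℝ (Fin d)) ℝ =>
          ∑ i : Fin d, A ![EuclideanSpace.single i 1, EuclideanSpace.single i 1])
        ∘ (iteratedFDeriv ℝ 2 k) := rfl
    rw [this]
    refine Continuous.comp ?_ (hk.continuous_iteratedFDeriv (by exact WithTop.coe_le_coe.2 le_top))
    exact continuous_finset_sum _ fun i _ =>
      (ContinuousMultilinearMap.apply ℝ (fun _ : Fin 2 => EuclideanSpace ℝ (Fin d)) ℝ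
        ![EuclideanSpace.single i 1, EuclideanSpace.single i 1]).continuous
  have hlapsupp : HasCompactSupport (lap (d := d) k) := by
    have := (hkc.iteratedFDeriv (𝕜 := ℝ) 2).comp_left
      (g := fun A : ContinuousMultilinearMap ℝ (fun _ : Fin 2 => EuclideanSpace ℝ (Fin d)) ℝ =>
        ∑ i : Fin d, A ![EuclideanSpace.single i 1, EuclideanSpace.single i 1]) (by simp)
    exact this
  have hmem : MemLp (lap (d := d) k) 2 volume :=
    hlapc.memLp_of_hasCompactSupport hlapsupp
  set K : ℝ := (eLpNorm (lap (d := d) k) 2 volume).toReal with hKdef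
  have hKofReal : eLpNorm (lap (d := d) k) 2 volume = ENNReal.ofReal K :=
    (ENNReal.ofReal_toReal hmem.eLpNorm_lt_top.ne).symm
  have hK0 : 0 ≤ K := ENNReal.toReal_nonneg
  refine ⟨(1/2) * K + 1, by positivity, 1, one_pos, ?_⟩
  intro x0 _ R hR1 hRle
  set lam : ℝ := Real.sqrt (V x0) with hlam
  have hlam1 : 1 ≤ lam := le_trans hR1 hRle
  have hlampos : 0 < lam := lt_of_lt_of_le one_pos hlam1
  set s : ℝ := Real.sqrt lam with hs
  have hs1 : 1 ≤ s := by
    rw [hs, show (1:ℝ) = Real.sqrt 1 from (Real.sqrt_one).symm]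
    exact Real.sqrt_le_sqrt hlam1
  have hspos : 0 < s := lt_of_lt_of_le one_pos hs1
  have hss : s ^ 2 = lam := Real.sq_sqrt hlampos.le
  set r : ℝ := R / s with hrdef
  have hRpos : 0 < R := lt_of_lt_of_le one_pos hR1
  have hrpos : 0 < r := div_pos hRpos hspos
  have hrles : r ≤ s := by
    rw [hrdef, div_le_iff₀ hspos]
    nlinarith [hRle, hss]
  set c₀ : ℝ := r ^ (-(d:ℝ)/2) with hc0
  have hc0pos : 0 < c₀ := Real.rpow_pos_of_pos hrpos _
  have hcr : c₀ * r ^ ((d:ℝ)/2) = 1 := by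
    rw [hc0, ← Real.rpow_add hrpos, show (-(d:ℝ)/2 + (d:ℝ)/2) = 0 by ring, Real.rpow_zero]
  -- part 1
  have hu1 : eLpNorm (fun x => c₀ * k (r⁻¹ • (x - x0))) 2 volume = 1 := by
    have heqfun : (fun x => c₀ * k (r⁻¹ • (x - x0)))
        = c₀ • (fun x => k (r⁻¹ • (x - x0))) := by
      funext x; simp
    rw [heqfun, eLpNorm_const_smul, eLpNorm_scale k hk.continuous hrpos x0, hknorm, mul_one,
      Real.enorm_eq_ofReal hc0pos.le, ← ENNReal.ofReal_mul hc0pos.le, hcr, ENNReal.ofReal_one]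
  refine ⟨hu1, ?_⟩
  -- part 2
  have hεnn : 0 ≤ ε lam := (hεpos lam hlampos).le
  have hucont : Continuous (fun x : EuclideanSpace ℝ (Fin d) => c₀ * k (r⁻¹ • (x - x0))) := by
    have := hk.continuous; fun_prop
  set f₁ : EuclideanSpace ℝ (Fin d) → ℝ :=
    fun x => (V x - lam ^ 2) * (c₀ * k (r⁻¹ • (x - x0))) with hf₁def
  set bc : ℝ := -(1/2) * (c₀ * r⁻¹ ^ 2) with hbcdef
  set f₂ : EuclideanSpace ℝ (Fin d) → ℝ :=
    fun x => bc * lap k (r⁻¹ • (x - x0)) with hf₂def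
  have hfun_eq : ∀ x, V x * (c₀ * k (r⁻¹ • (x - x0)))
      - 1 / 2 * lap (fun y => c₀ * k (r⁻¹ • (y - x0))) x
      - lam ^ 2 * (c₀ * k (r⁻¹ • (x - x0))) = f₁ x + f₂ x := by
    intro x
    rw [hf₁def, hf₂def, hbcdef, lap_scale k hk r c₀ x0 x]
    ring
  have hf₁m : AEStronglyMeasurable f₁ volume :=
    ((hV2.continuous.sub continuous_const).mul hucont).aestronglyMeasurable
  have hf₂m : AEStronglyMeasurable f₂ volume := by
    have : Continuous f₂ := by
      rw [hf₂def]; exact continuous_const.mul (hlapc.comp (by fun_prop))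
    exact this.aestronglyMeasurable
  -- pointwise bound for f₁
  have hrl : r * lam ^ ((3:ℝ)/2) = R * lam := by
    have h32 : lam ^ ((3:ℝ)/2) = lam * s := by
      rw [show (3:ℝ)/2 = 1 + 1/2 by norm_num, Real.rpow_add hlampos, Real.rpow_one, hs,
        Real.sqrt_eq_rpow]
    rw [h32, hrdef]
    field_simp
  have hpoint : ∀ x, ‖f₁ x‖ ≤ ‖(R * lam * ε lam) * (c₀ * k (r⁻¹ • (x - x0)))‖ := by
    intro x
    rcases eq_or_ne (k (r⁻¹ • (x - x0))) 0 with h0 | h0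
    · simp [hf₁def, h0]
    · have hmem' : r⁻¹ • (x - x0) ∈ ball (0 : EuclideanSpace ℝ (Fin d)) 1 :=
        hksupp (Function.mem_support.2 h0)
      have hlt : ‖r⁻¹ • (x - x0)‖ < 1 := by
        simpa [mem_ball, dist_zero_right] using hmem'
      have hxr : ‖x - x0‖ ≤ r := by
        rw [norm_smul, Real.norm_eq_abs, abs_of_pos (inv_pos.2 hrpos)] at hlt
        nlinarith [norm_nonneg (x - x0), hrpos, mul_lt_mul_of_pos_left hlt hrpos,
          mul_inv_cancel₀ hrpos.ne']
      have hVx0 : V x0 = lam ^ 2 := (Real.sq_sqrt (hVnn x0)).symm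
      have hball : x ∈ Metric.closedBall x0 (Real.sqrt lam) := by
        rw [Metric.mem_closedBall, dist_eq_norm, ← hs]
        exact le_trans hxr hrles
      have hest := hεV lam hlam1 x0 (le_of_eq hVx0) x hball
      have h32nn : (0:ℝ) ≤ lam ^ ((3:ℝ)/2) := Real.rpow_nonneg hlampos.le _
      have hbound : |V x - lam ^ 2| ≤ R * lam * ε lam := by
        rw [← hVx0]
        calc |V x - V x0| ≤ ‖x - x0‖ * lam ^ ((3:ℝ)/2) * ε lam := hest
          _ ≤ r * lam ^ ((3:ℝ)/2) * ε lam := by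
              apply mul_le_mul_of_nonneg_right _ hεnn
              exact mul_le_mul_of_nonneg_right hxr h32nn
          _ = R * lam * ε lam := by rw [hrl]
      rw [hf₁def]
      simp only [norm_mul, Real.norm_eq_abs]
      apply mul_le_mul_of_nonneg_right _ (mul_nonneg (abs_nonneg _) (abs_nonneg _))
      calc |V x - lam ^ 2| ≤ R * lam * ε lam := hbound
        _ ≤ |R * lam * ε lam| := le_abs_self _
        _ = |R| * |lam| * |ε lam| := by rw [abs_mul, abs_mul]
  have hb1 : eLpNorm f₁ 2 volume ≤ ENNReal.ofReal (R * lam * ε lam) := by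
    calc eLpNorm f₁ 2 volume
        ≤ eLpNorm (fun x => (R * lam * ε lam) * (c₀ * k (r⁻¹ • (x - x0)))) 2 volume :=
          eLpNorm_mono hpoint
      _ = ENNReal.ofReal (R * lam * ε lam) := by
          have heqf : (fun x => (R * lam * ε lam) * (c₀ * k (r⁻¹ • (x - x0))))
              = (R * lam * ε lam) • (fun x => c₀ * k (r⁻¹ • (x - x0))) := by
            funext x; simp
          rw [heqf, eLpNorm_const_smul, hu1, mul_one,
            Real.enorm_eq_ofReal (by positivity)]
  have hrinv : r⁻¹ ^ 2 = lam / R ^ 2 := by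
    rw [hrdef, inv_div, div_pow, hss]
  have hb2 : eLpNorm f₂ 2 volume ≤ ENNReal.ofReal ((1/2) * (lam / R ^ 2) * K) := by
    have heqf : f₂ = bc • (fun x => lap k (r⁻¹ • (x - x0))) := by
      funext x; simp [hf₂def]
    rw [heqf, eLpNorm_const_smul, eLpNorm_scale (lap (d := d) k) hlapc hrpos x0, hKofReal,
      Real.enorm_eq_ofReal_abs,
      ← ENNReal.ofReal_mul (by positivity : (0:ℝ) ≤ r ^ ((d:ℝ)/2)),
      ← ENNReal.ofReal_mul (abs_nonneg _)]
    apply ENNReal.ofReal_le_ofReal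
    have habs : |bc| = (1/2) * (c₀ * r⁻¹ ^ 2) := by
      rw [hbcdef, abs_of_nonpos (by nlinarith [hc0pos, sq_nonneg r⁻¹])]
      ring
    calc |bc| * (r ^ ((d:ℝ)/2) * K) = (1/2) * r⁻¹ ^ 2 * K * (c₀ * r ^ ((d:ℝ)/2)) := by
          rw [habs]; ring
      _ = (1/2) * (lam / R ^ 2) * K := by rw [hcr, hrinv]; ring
      _ ≤ (1/2) * (lam / R ^ 2) * K := le_refl _
  have hstep : eLpNorm (fun x =>
      V x * (c₀ * k (r⁻¹ • (x - x0)))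
      - 1 / 2 * lap (fun y => c₀ * k (r⁻¹ • (y - x0))) x
      - lam ^ 2 * (c₀ * k (r⁻¹ • (x - x0)))) 2 volume
      ≤ eLpNorm f₁ 2 volume + eLpNorm f₂ 2 volume := by
    have hcongr : eLpNorm (fun x =>
        V x * (c₀ * k (r⁻¹ • (x - x0)))
        - 1 / 2 * lap (fun y => c₀ * k (r⁻¹ • (y - x0))) x
        - lam ^ 2 * (c₀ * k (r⁻¹ • (x - x0)))) 2 volume
        = eLpNorm (f₁ + f₂) 2 volume := by
      apply eLpNorm_congr_ae
      filter_upwards with x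
      simp only [Pi.add_apply]
      exact hfun_eq x
    rw [hcongr]
    exact eLpNorm_add_le hf₁m hf₂m one_le_two
  refine le_trans hstep ?_
  refine le_trans (add_le_add hb1 hb2) ?_
  rw [← ENNReal.ofReal_add (by positivity) (by positivity)]
  apply ENNReal.ofReal_le_ofReal
  have h1 : 0 ≤ lam * (1 / R ^ 2) := by positivity
  have h2 : 0 ≤ K * (lam * (R * ε lam)) := by positivity
  have hRR : lam / R ^ 2 = lam * (1 / R ^ 2) := by ring
  nlinarith [h1, h2]
end
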